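/- Let n ≥ 2, 0 < λ ≤ Λ, M₁ > 0, M₂ ≥ 0, κ ≥ 0, let z ∈ ℝⁿ \ {0} with s := |z| and ẑ := z/s, let υ' (s), υ''(s) ∈ ℝ, and set A := M₁ [ (υ'(s)/s) I + (υ''(s) − υ'(s)/s) ẑ ⊗ ẑ ] ∈ Sym(n). Suppose X, Y ∈ Sym(n) satisfy, for all v, w ∈ ℝⁿ, ⟨Xv, v⟩ − ⟨Yw, w⟩ ≤ ⟨A(v − w), v − w⟩ + (2M₂ + κ)(|v|² + |w|²). Then: (i) every eigenvalue of X − Y is at most 4M₂ + 2κ; (ii) ⟨(X − Y)ẑ, ẑ⟩ ≤ 4M₁υ''(s) + 4M₂ + 2κ, so the smallest eigenvalue of X − Y is at most 4M₁υ''(s) + 4M₂ + 2κ; (iii) if in addition 4M₁υ''(s) + 4M₂ + 2κ ≤ 0, then P⁺_{λ,Λ}(X − Y) ≤ 2(λ + Λ(n − 1))(2M₂ + κ) + 4λM₁υ''(s). -/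

import Mathlib

open Real Set Metric
open scoped RealInnerProductSpace

/-- The operator (ℓ²→ℓ²) norm of a real `n × n` matrix. -/
noncomputable def matOpNorm {n : ℕ} (N : Matrix (Fin n) (Fin n) ℝ) : ℝ :=
  ‖Matrix.toEuclideanCLM (𝕜 := ℝ) N‖

/-- `F` is continuous, `F 0 = 0`, and `F` is uniformly `(lam, Lam)`-elliptic:
`lam‖N‖ ≤ F(M+N) - F(M) ≤ Lam‖N‖` for all symmetric `M, N` with `N` positive semidefinite. -/
def UniformlyElliptic {n : ℕ} (lam Lam : ℝ) (F : Matrix (Fin n) (Fin n) ℝ → ℝ) : Prop :=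
  Continuous F ∧ F 0 = 0 ∧
    ∀ M N : Matrix (Fin n) (Fin n) ℝ, M.IsSymm → N.IsSymm → N.PosSemidef →
      lam * matOpNorm N ≤ F (M + N) - F M ∧ F (M + N) - F M ≤ Lam * matOpNorm N

/-- The Hessian matrix of `φ` at `x`, given by the second iterated Fréchet derivative. -/
noncomputable def hessianMatrix {n : ℕ} (φ : EuclideanSpace ℝ (Fin n) → ℝ)
    (x : EuclideanSpace ℝ (Fin n)) : Matrix (Fin n) (Fin n) ℝ :=
  fun i j => iteratedFDeriv ℝ 2 φ x ![EuclideanSpace.single i 1, EuclideanSpace.single j 1]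

/-- Viscosity supersolution of `[|Du+ξ|^{p(x)} + a(x)|Du+ξ|^{q(x)}] F(D²u) = f(x)` on `Ω`:
whenever a `C²` function `φ` is such that `u - φ` has a local minimum at `x₀ ∈ Ω`,
`[|Dφ(x₀)+ξ|^{p(x₀)} + a(x₀)|Dφ(x₀)+ξ|^{q(x₀)}] F(D²φ(x₀)) ≤ f(x₀)`. -/
def IsViscositySupersol {n : ℕ} (Ω : Set (EuclideanSpace ℝ (Fin n)))
    (p q a f : EuclideanSpace ℝ (Fin n) → ℝ) (ξ : EuclideanSpace ℝ (Fin n))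
    (F : Matrix (Fin n) (Fin n) ℝ → ℝ) (u : EuclideanSpace ℝ (Fin n) → ℝ) : Prop :=
  ∀ x₀ ∈ Ω, ∀ φ : EuclideanSpace ℝ (Fin n) → ℝ, ContDiff ℝ 2 φ →
    IsLocalMin (fun x => u x - φ x) x₀ →
    (‖gradient φ x₀ + ξ‖ ^ (p x₀) + a x₀ * ‖gradient φ x₀ + ξ‖ ^ (q x₀)) *
      F (hessianMatrix φ x₀) ≤ f x₀

/-- Viscosity subsolution of `[|Du+ξ|^{p(x)} + a(x)|Du+ξ|^{q(x)}] F(D²u) = f(x)` on `Ω`. -/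
def IsViscositySubsol {n : ℕ} (Ω : Set (EuclideanSpace ℝ (Fin n)))
    (p q a f : EuclideanSpace ℝ (Fin n) → ℝ) (ξ : EuclideanSpace ℝ (Fin n))
    (F : Matrix (Fin n) (Fin n) ℝ → ℝ) (u : EuclideanSpace ℝ (Fin n) → ℝ) : Prop :=
  ∀ x₀ ∈ Ω, ∀ φ : EuclideanSpace ℝ (Fin n) → ℝ, ContDiff ℝ 2 φ →
    IsLocalMax (fun x => u x - φ x) x₀ →
    f x₀ ≤ (‖gradient φ x₀ + ξ‖ ^ (p x₀) + a x₀ * ‖gradient φ x₀ + ξ‖ ^ (q x₀)) *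
      F (hessianMatrix φ x₀)

/-- Viscosity solution: both a viscosity supersolution and a viscosity subsolution. -/
def IsViscositySol {n : ℕ} (Ω : Set (EuclideanSpace ℝ (Fin n)))
    (p q a f : EuclideanSpace ℝ (Fin n) → ℝ) (ξ : EuclideanSpace ℝ (Fin n))
    (F : Matrix (Fin n) (Fin n) ℝ → ℝ) (u : EuclideanSpace ℝ (Fin n) → ℝ) : Prop :=
  IsViscositySupersol Ω p q a f ξ F u ∧ IsViscositySubsol Ω p q a f ξ F u

/-- The Pucci maximal operator `P⁺_{λ,Λ}(M) = Λ Σ_{λ̄ᵢ>0} λ̄ᵢ + λ Σ_{λ̄ᵢ<0} λ̄ᵢ`. -/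
noncomputable def pucciPlus {n : ℕ} (lam Lam : ℝ) (N : Matrix (Fin n) (Fin n) ℝ)
    (hN : N.IsHermitian) : ℝ :=
  Lam * ∑ i, max (hN.eigenvalues i) 0 + lam * ∑ i, min (hN.eigenvalues i) 0


/-!
Testing the coupling inequality with `w = v` removes `A` and gives
`⟨(X - Y)v, v⟩ ≤ 2(2M₂ + κ)|v|²`, which bounds every eigenvalue. Testing it with `(ẑ, -ẑ)`
picks up `⟨A(2ẑ), 2ẑ⟩ = 4M₁υ''(s)`, and the smallest eigenvalue is at most this Rayleigh
quotient. When that bound is nonpositive, this eigenvalue enters `P⁺` with weight `λ`, and each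
of the other `n - 1` contributes at most `Λ(4M₂ + 2κ)`.
-/

namespace Matrix

variable {ι : Type*} [Fintype ι]

theorem dotProduct_inv_sqrt_smul_self {z : ι → ℝ} (hz : z ≠ 0) :
    ((√(z ⬝ᵥ z))⁻¹ • z) ⬝ᵥ ((√(z ⬝ᵥ z))⁻¹ • z) = 1 := by
  have hpos : 0 < z ⬝ᵥ z :=
    lt_of_le_of_ne (Finset.sum_nonneg fun i _ => mul_self_nonneg (z i))
      (fun h => hz (dotProduct_self_eq_zero.mp h.symm))
  rw [smul_dotProduct, dotProduct_smul, smul_eq_mul, smul_eq_mul, ← mul_assoc, ← mul_inv,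
    Real.mul_self_sqrt hpos.le, inv_mul_cancel₀ hpos.ne']

theorem vecMulVec_self_mulVec_dotProduct (u v : ι → ℝ) :
    (vecMulVec u u *ᵥ v) ⬝ᵥ v = (u ⬝ᵥ v) ^ 2 := by
  rw [vecMulVec_mulVec, op_smul_eq_smul, smul_dotProduct, smul_eq_mul, sq]

theorem mulVec_dotProduct_eq_dotProduct_transpose_mulVec {R : Type*} [CommSemiring R]
    {m : Type*} [Fintype m] (M : Matrix m ι R) (w : ι → R) (x : m → R) :
    (M *ᵥ w) ⬝ᵥ x = w ⬝ᵥ (Mᵀ *ᵥ x) := by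
  rw [dotProduct_comm, dotProduct_mulVec, ← mulVec_transpose, dotProduct_comm]

section Coupling

variable {X Y A : Matrix ι ι ℝ} {c : ℝ}
  (hXY : ∀ v w : ι → ℝ,
    (X *ᵥ v) ⬝ᵥ v - (Y *ᵥ w) ⬝ᵥ w ≤ (A *ᵥ (v - w)) ⬝ᵥ (v - w) + c * (v ⬝ᵥ v + w ⬝ᵥ w))
include hXY

theorem sub_mulVec_dotProduct_self_le_of_coupling (v : ι → ℝ) :
    ((X - Y) *ᵥ v) ⬝ᵥ v ≤ 2 * c * (v ⬝ᵥ v) := by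
  have h := hXY v v
  rw [sub_self, mulVec_zero, zero_dotProduct] at h
  rw [sub_mulVec, sub_dotProduct]
  linarith

theorem sub_mulVec_dotProduct_self_le_of_coupling_neg (v : ι → ℝ) :
    ((X - Y) *ᵥ v) ⬝ᵥ v ≤ 4 * ((A *ᵥ v) ⬝ᵥ v) + 2 * c * (v ⬝ᵥ v) := by
  have h := hXY v (-v)
  rw [sub_neg_eq_add, ← two_smul ℝ v, mulVec_neg, neg_dotProduct, dotProduct_neg, neg_neg,
    neg_dotProduct, dotProduct_neg, neg_neg, mulVec_smul, smul_dotProduct, dotProduct_smul,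
    smul_eq_mul, smul_eq_mul] at h
  rw [sub_mulVec, sub_dotProduct]
  linarith

end Coupling

namespace IsHermitian

variable [DecidableEq ι] {B : Matrix ι ι ℝ} (hB : B.IsHermitian)
include hB

theorem eigenvalues_le_of_mulVec_dotProduct_le {c : ℝ}
    (h : ∀ v : ι → ℝ, (B *ᵥ v) ⬝ᵥ v ≤ c * (v ⬝ᵥ v)) (i : ι) : hB.eigenvalues i ≤ c := by
  have hb : ⇑(hB.eigenvectorBasis i) ⬝ᵥ ⇑(hB.eigenvectorBasis i) = 1 := by
    have h1 : ⟪hB.eigenvectorBasis i, hB.eigenvectorBasis i⟫ = 1 := by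
      rw [real_inner_self_eq_norm_sq, hB.eigenvectorBasis.orthonormal.1 i, one_pow]
    rwa [EuclideanSpace.inner_eq_star_dotProduct, star_trivial] at h1
  have := h (hB.eigenvectorBasis i)
  rwa [hB.mulVec_eigenvectorBasis, smul_dotProduct, hb, smul_eq_mul, mul_one, mul_one] at this

theorem mulVec_dotProduct_self_eq_sum (x : ι → ℝ) :
    (B *ᵥ x) ⬝ᵥ x =
      ∑ i, hB.eigenvalues i * ((hB.eigenvectorUnitary : Matrix ι ι ℝ)ᵀ *ᵥ x) i ^ 2 := by
  conv_lhs => rw [hB.spectral_theorem]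
  rw [Unitary.conjStarAlgAut_apply, ← mulVec_mulVec, ← mulVec_mulVec,
    mulVec_dotProduct_eq_dotProduct_transpose_mulVec, star_eq_conjTranspose,
    conjTranspose_eq_transpose_of_trivial]
  simp [mulVec_diagonal, dotProduct, sq, mul_assoc]

theorem dotProduct_self_eq_sum_sq (x : ι → ℝ) :
    x ⬝ᵥ x = ∑ i, ((hB.eigenvectorUnitary : Matrix ι ι ℝ)ᵀ *ᵥ x) i ^ 2 := by
  set U : Matrix ι ι ℝ := ↑hB.eigenvectorUnitary
  have hx : x = U *ᵥ (Uᵀ *ᵥ x) := by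
    rw [mulVec_mulVec, ← conjTranspose_eq_transpose_of_trivial, ← star_eq_conjTranspose,
      mem_unitaryGroup_iff.mp hB.eigenvectorUnitary.2, one_mulVec]
  conv_lhs => enter [1]; rw [hx]
  rw [mulVec_dotProduct_eq_dotProduct_transpose_mulVec]
  simp only [dotProduct, sq]

theorem exists_eigenvalues_le_mulVec_dotProduct {x : ι → ℝ} (hx : x ⬝ᵥ x = 1) :
    ∃ i, hB.eigenvalues i ≤ (B *ᵥ x) ⬝ᵥ x := by
  have : Nonempty ι := by
    by_contra h
    rw [not_nonempty_iff] at h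
    simp [dotProduct] at hx
  obtain ⟨i₀, -, hmin⟩ := Finset.univ.exists_min_image hB.eigenvalues Finset.univ_nonempty
  refine ⟨i₀, ?_⟩
  rw [hB.dotProduct_self_eq_sum_sq] at hx
  calc hB.eigenvalues i₀
      = ∑ i, hB.eigenvalues i₀ * ((hB.eigenvectorUnitary : Matrix ι ι ℝ)ᵀ *ᵥ x) i ^ 2 := by
        rw [← Finset.mul_sum, hx, mul_one]
    _ ≤ _ := by
      rw [hB.mulVec_dotProduct_self_eq_sum]
      gcongr with i
      exact hmin i (Finset.mem_univ i)

end IsHermitian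

end Matrix

section PositiveNegativeParts

variable {ι : Type*} [Fintype ι] [DecidableEq ι]

theorem sum_min_zero_le_apply (f : ι → ℝ) (i₀ : ι) : ∑ i, min (f i) 0 ≤ f i₀ := by
  rw [← Finset.add_sum_erase _ _ (Finset.mem_univ i₀)]
  have hrest : ∑ i ∈ Finset.univ.erase i₀, min (f i) 0 ≤ 0 :=
    Finset.sum_nonpos fun i _ => min_le_right _ _
  linarith [min_le_left (f i₀) 0]

theorem sum_max_zero_le_card_sub_one_mul {f : ι → ℝ} {c : ℝ} (hf : ∀ i, f i ≤ c) (hc : 0 ≤ c)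
    {i₀ : ι} (hi₀ : f i₀ ≤ 0) :
    ∑ i, max (f i) 0 ≤ ((Fintype.card ι : ℝ) - 1) * c := by
  rw [← Finset.add_sum_erase _ _ (Finset.mem_univ i₀), max_eq_right hi₀, zero_add]
  calc ∑ i ∈ Finset.univ.erase i₀, max (f i) 0
      ≤ (Finset.univ.erase i₀).card • c :=
        Finset.sum_le_card_nsmul _ _ _ fun i _ => max_le (hf i) hc
    _ = ((Fintype.card ι : ℝ) - 1) * c := by
        rw [Finset.card_erase_of_mem (Finset.mem_univ i₀), Finset.card_univ, nsmul_eq_mul,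
          Nat.cast_pred (Fintype.card_pos_iff.mpr ⟨i₀⟩)]

end PositiveNegativeParts

theorem pucciPlus_le_of_eigenvalues_le {n : ℕ} {lam Lam c : ℝ} {N : Matrix (Fin n) (Fin n) ℝ}
    (hN : N.IsHermitian) (hlam : 0 ≤ lam) (hLam : 0 ≤ Lam) (hc : 0 ≤ c)
    (hle : ∀ i, hN.eigenvalues i ≤ c) {i₀ : Fin n} (hi₀ : hN.eigenvalues i₀ ≤ 0) :
    pucciPlus lam Lam N hN ≤ Lam * (((n : ℝ) - 1) * c) + lam * hN.eigenvalues i₀ := by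
  have hmax := sum_max_zero_le_card_sub_one_mul hle hc hi₀
  rw [Fintype.card_fin] at hmax
  unfold pucciPlus
  gcongr
  exact sum_min_zero_le_apply _ i₀

open Matrix in
theorem ishii_lions_matrix_inequalities_general
    (n : ℕ) (lam Lam : ℝ) (hlam : 0 < lam) (hlamLam : lam ≤ Lam)
    (M₁ M₂ κ : ℝ) (hM₂ : 0 ≤ M₂) (hκ : 0 ≤ κ)
    (z : Fin n → ℝ) (hz : z ≠ 0)
    (s : ℝ) (hs : s = Real.sqrt (z ⬝ᵥ z))
    (zhat : Fin n → ℝ) (hzhat : zhat = s⁻¹ • z)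
    (υ' υ'' : ℝ)
    (A : Matrix (Fin n) (Fin n) ℝ)
    (hA : A = M₁ • ((υ' / s) • (1 : Matrix (Fin n) (Fin n) ℝ) +
      (υ'' - υ' / s) • Matrix.vecMulVec zhat zhat))
    (X Y : Matrix (Fin n) (Fin n) ℝ)
    (hXY : ∀ v w : Fin n → ℝ,
      (X *ᵥ v) ⬝ᵥ v - (Y *ᵥ w) ⬝ᵥ w ≤
        (A *ᵥ (v - w)) ⬝ᵥ (v - w) + (2 * M₂ + κ) * (v ⬝ᵥ v + w ⬝ᵥ w)) :
    (∀ h : (X - Y).IsHermitian, ∀ i, h.eigenvalues i ≤ 4 * M₂ + 2 * κ) ∧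
    (((X - Y) *ᵥ zhat) ⬝ᵥ zhat ≤ 4 * M₁ * υ'' + 4 * M₂ + 2 * κ) ∧
    (∀ h : (X - Y).IsHermitian, ∃ i, h.eigenvalues i ≤ 4 * M₁ * υ'' + 4 * M₂ + 2 * κ) ∧
    (4 * M₁ * υ'' + 4 * M₂ + 2 * κ ≤ 0 →
      ∀ h : (X - Y).IsHermitian,
        pucciPlus lam Lam (X - Y) h ≤
          2 * (lam + Lam * ((n : ℝ) - 1)) * (2 * M₂ + κ) + 4 * lam * M₁ * υ'') := by
  have hunit : zhat ⬝ᵥ zhat = 1 := by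
    rw [hzhat, hs]
    exact dotProduct_inv_sqrt_smul_self hz
  have hAzhat : (A *ᵥ zhat) ⬝ᵥ zhat = M₁ * υ'' := by
    simp only [hA, smul_mulVec, add_mulVec, one_mulVec, smul_dotProduct, add_dotProduct,
      vecMulVec_self_mulVec_dotProduct, hunit, smul_eq_mul]
    ring
  have hall : ∀ h : (X - Y).IsHermitian, ∀ i, h.eigenvalues i ≤ 4 * M₂ + 2 * κ :=
    fun h => h.eigenvalues_le_of_mulVec_dotProduct_le fun v => by
      linarith [sub_mulVec_dotProduct_self_le_of_coupling hXY v]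
  have hzhatXY : ((X - Y) *ᵥ zhat) ⬝ᵥ zhat ≤ 4 * M₁ * υ'' + 4 * M₂ + 2 * κ := by
    have h := sub_mulVec_dotProduct_self_le_of_coupling_neg hXY zhat
    rw [hAzhat, hunit] at h
    linarith
  have hsome : ∀ h : (X - Y).IsHermitian, ∃ i, h.eigenvalues i ≤ 4 * M₁ * υ'' + 4 * M₂ + 2 * κ :=
    fun h => (h.exists_eigenvalues_le_mulVec_dotProduct hunit).imp fun _ hi => hi.trans hzhatXY
  refine ⟨hall, hzhatXY, hsome, fun hneg h => ?_⟩
  obtain ⟨i₀, hi₀⟩ := hsome h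
  calc pucciPlus lam Lam (X - Y) h
      ≤ Lam * (((n : ℝ) - 1) * (4 * M₂ + 2 * κ)) + lam * h.eigenvalues i₀ :=
        pucciPlus_le_of_eigenvalues_le h hlam.le (hlam.le.trans hlamLam) (by linarith) (hall h)
          (hi₀.trans hneg)
    _ ≤ Lam * (((n : ℝ) - 1) * (4 * M₂ + 2 * κ)) + lam * (4 * M₁ * υ'' + 4 * M₂ + 2 * κ) := by
        gcongr
    _ = 2 * (lam + Lam * ((n : ℝ) - 1)) * (2 * M₂ + κ) + 4 * lam * M₁ * υ'' := by ring

open Matrix in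
/-- **Matrix inequalities from the Ishii–Lions lemma (proof of Lemma 4.1).**
If `X, Y` satisfy `⟨Xv,v⟩ − ⟨Yw,w⟩ ≤ ⟨A(v−w), v−w⟩ + (2M₂+κ)(|v|²+|w|²)` with
`A = M₁[(υ'(s)/s)I + (υ''(s) − υ'(s)/s) ẑ⊗ẑ]`, then every eigenvalue of `X − Y` is at most
`4M₂ + 2κ`, the smallest eigenvalue of `X − Y` is at most `4M₁υ''(s) + 4M₂ + 2κ`, and if
this last quantity is nonpositive then
`P⁺_{λ,Λ}(X−Y) ≤ 2(λ + Λ(n−1))(2M₂+κ) + 4λM₁υ''(s)`. -/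
theorem ishii_lions_matrix_inequalities
    (n : ℕ) (hn : 2 ≤ n) (lam Lam : ℝ) (hlam : 0 < lam) (hlamLam : lam ≤ Lam)
    (M₁ M₂ κ : ℝ) (hM₁ : 0 < M₁) (hM₂ : 0 ≤ M₂) (hκ : 0 ≤ κ)
    (z : Fin n → ℝ) (hz : z ≠ 0)
    (s : ℝ) (hs : s = Real.sqrt (z ⬝ᵥ z))
    (zhat : Fin n → ℝ) (hzhat : zhat = s⁻¹ • z)
    (υ' υ'' : ℝ)
    (A : Matrix (Fin n) (Fin n) ℝ)
    (hA : A = M₁ • ((υ' / s) • (1 : Matrix (Fin n) (Fin n) ℝ) +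
      (υ'' - υ' / s) • Matrix.vecMulVec zhat zhat))
    (X Y : Matrix (Fin n) (Fin n) ℝ) (hX : X.IsSymm) (hY : Y.IsSymm)
    (hXY : ∀ v w : Fin n → ℝ,
      (X *ᵥ v) ⬝ᵥ v - (Y *ᵥ w) ⬝ᵥ w ≤
        (A *ᵥ (v - w)) ⬝ᵥ (v - w) + (2 * M₂ + κ) * (v ⬝ᵥ v + w ⬝ᵥ w)) :
    (∀ h : (X - Y).IsHermitian, ∀ i, h.eigenvalues i ≤ 4 * M₂ + 2 * κ) ∧
    (((X - Y) *ᵥ zhat) ⬝ᵥ zhat ≤ 4 * M₁ * υ'' + 4 * M₂ + 2 * κ) ∧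
    (∀ h : (X - Y).IsHermitian, ∃ i, h.eigenvalues i ≤ 4 * M₁ * υ'' + 4 * M₂ + 2 * κ) ∧
    (4 * M₁ * υ'' + 4 * M₂ + 2 * κ ≤ 0 →
      ∀ h : (X - Y).IsHermitian,
        pucciPlus lam Lam (X - Y) h ≤
          2 * (lam + Lam * ((n : ℝ) - 1)) * (2 * M₂ + κ) + 4 * lam * M₁ * υ'') :=
  ishii_lions_matrix_inequalities_general n lam Lam hlam hlamLam M₁ M₂ κ hM₂ hκ z hz s hs zhat hzhat
    υ' υ'' A hA X Y hXY
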